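/- For every Υ = (Υ₁,Υ₂,Υ₃,Υ₄,Υ₅,Υ₆) ∈ ℝ⁴ × ℝ² × ℝ² and all ρ, p, q ∈ ℝ, the matrix L(Υ) is invertible and there exist λ, h, k ∈ ℝ such that L(Υ)·𝔏(ρ,p,q)·L(Υ)⁻¹ = 𝔏(λ,h,k). Hence the three-parameter Heisenberg-type group {𝔏(ρ,p,q) : ρ,p,q ∈ ℝ} is a normal subgroup of the solvable group formed by the matrices L(Υ). -/
import Mathlib


open Matrix

/-- The `6×6` matrix `𝔏(ρ,p,q)`: the identity except for the entries
`𝔏₁₄ = 2p`, `𝔏₁₅ = ρ − 4pq`, `𝔏₁₆ = −2p²`, `𝔏₂₄ = 2q`, `𝔏₂₅ = −2q²`, `𝔏₂₆ = −ρ`,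
`𝔏₄₅ = −2q`, `𝔏₄₆ = −2p`. -/
def frakL (ρ p q : ℝ) : Matrix (Fin 6) (Fin 6) ℝ :=
  !![1, 0, 0, 2 * p, ρ - 4 * p * q, -2 * p ^ 2;
     0, 1, 0, 2 * q, -2 * q ^ 2, -ρ;
     0, 0, 1, 0, 0, 0;
     0, 0, 0, 1, -2 * q, -2 * p;
     0, 0, 0, 0, 1, 0;
     0, 0, 0, 0, 0, 1]

/-- The solvable coset representative `L(Υ)` of `SO(2,4)/(SO(2)×SO(4))` (the case
`s = 1`, `N = 6`) in the solvable coordinates `Υ = (Υ₁,Υ₂,Υ₃,Υ₄,Υ₅,Υ₆) ∈ ℝ⁴×ℝ²×ℝ²`. -/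
noncomputable def Lsolv6 (u₁ u₂ u₃ u₄ : ℝ) (U₅ U₆ : Fin 2 → ℝ) :
    Matrix (Fin 6) (Fin 6) ℝ :=
  !![Real.exp u₁, Real.exp u₁ / Real.sqrt 2 * u₃,
      (1 / 2) * Real.exp u₁ * (Real.sqrt 2 * U₅ 0 + u₃ * U₆ 0),
      (1 / 2) * Real.exp u₁ * (Real.sqrt 2 * U₅ 1 + u₃ * U₆ 1),
      Real.exp u₁ * (-(1 / 2) * (U₅ 0 * U₆ 0 + U₅ 1 * U₆ 1)
        - u₃ * (U₆ 0 ^ 2 + U₆ 1 ^ 2) / (4 * Real.sqrt 2) + u₄ / Real.sqrt 2),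
      -(1 / 4) * Real.exp u₁ * ((U₅ 0 ^ 2 + U₅ 1 ^ 2) + 2 * u₃ * u₄);
     0, Real.exp u₂, Real.exp u₂ / Real.sqrt 2 * U₆ 0, Real.exp u₂ / Real.sqrt 2 * U₆ 1,
      -(1 / 4) * Real.exp u₂ * (U₆ 0 ^ 2 + U₆ 1 ^ 2), -(Real.exp u₂ / Real.sqrt 2) * u₄;
     0, 0, 1, 0, -(U₆ 0 / Real.sqrt 2), -(U₅ 0 / Real.sqrt 2);
     0, 0, 0, 1, -(U₆ 1 / Real.sqrt 2), -(U₅ 1 / Real.sqrt 2);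
     0, 0, 0, 0, Real.exp (-u₂), -(Real.exp (-u₂) / Real.sqrt 2) * u₃;
     0, 0, 0, 0, 0, Real.exp (-u₁)]

set_option maxRecDepth 8000 in
set_option maxHeartbeats 2000000 in
/-- **The Heisenberg-type group is normal in the solvable group.**
For every `Υ` and all `ρ, p, q`, the matrix `L(Υ)` is invertible and
`L(Υ)·𝔏(ρ,p,q)·L(Υ)⁻¹ = 𝔏(λ,h,k)` for some `λ, h, k ∈ ℝ`; hence
`{𝔏(ρ,p,q)}` is a normal subgroup of the solvable group of the matrices `L(Υ)`. -/
theorem stmt_10 (u₁ u₂ u₃ u₄ : ℝ) (U₅ U₆ : Fin 2 → ℝ) (ρ p q : ℝ) :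
    IsUnit (Lsolv6 u₁ u₂ u₃ u₄ U₅ U₆) ∧
    ∃ lam h k : ℝ,
      Lsolv6 u₁ u₂ u₃ u₄ U₅ U₆ * frakL ρ p q * (Lsolv6 u₁ u₂ u₃ u₄ U₅ U₆)⁻¹ =
        frakL lam h k := by
  have hs2 : Real.sqrt 2 * Real.sqrt 2 = 2 := Real.mul_self_sqrt (by norm_num)
  have hs0 : Real.sqrt 2 ≠ 0 := by positivity
  have c5 : ∀ (x : ℝ) (u : Fin 5 → ℝ), Matrix.vecCons x u 5 = u 4 := fun x u => rfl
  have h2 : Real.sqrt 2 ^ 2 = 2 := Real.sq_sqrt (by norm_num)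
  have h4 : Real.sqrt 2 ^ 4 = 4 := by
    rw [show Real.sqrt 2 ^ 4 = (Real.sqrt 2 ^ 2) ^ 2 by ring, h2]; norm_num
  have h6 : Real.sqrt 2 ^ 6 = 8 := by
    rw [show Real.sqrt 2 ^ 6 = (Real.sqrt 2 ^ 2) ^ 3 by ring, h2]; norm_num
  have h8 : Real.sqrt 2 ^ 8 = 16 := by
    rw [show Real.sqrt 2 ^ 8 = (Real.sqrt 2 ^ 2) ^ 4 by ring, h2]; norm_num
  have h3 : Real.sqrt 2 ^ 3 = 2 * Real.sqrt 2 := by rw [pow_succ, h2]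
  have h5 : Real.sqrt 2 ^ 5 = 4 * Real.sqrt 2 := by rw [pow_succ, h4]
  have h7 : Real.sqrt 2 ^ 7 = 8 * Real.sqrt 2 := by rw [pow_succ, h6]
  have hd : (Lsolv6 u₁ u₂ u₃ u₄ U₅ U₆).det = 1 := by
    simp [Lsolv6, Matrix.det_succ_row_zero, Fin.sum_univ_succ, ← Real.exp_add]
  have hu : IsUnit (Lsolv6 u₁ u₂ u₃ u₄ U₅ U₆) :=
    (Matrix.isUnit_iff_isUnit_det _).2 (by rw [hd]; exact isUnit_one)
  refine ⟨hu, Real.exp (u₁ + u₂) * (ρ + Real.sqrt 2 * U₆ 1 * p - Real.sqrt 2 * U₅ 1 * q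
      + Real.sqrt 2 * u₃ * q ^ 2),
    Real.exp u₁ * (p + u₃ * q / Real.sqrt 2), Real.exp u₂ * q, ?_⟩
  have key : Lsolv6 u₁ u₂ u₃ u₄ U₅ U₆ * frakL ρ p q =
      frakL (Real.exp (u₁ + u₂) * (ρ + Real.sqrt 2 * U₆ 1 * p - Real.sqrt 2 * U₅ 1 * q
          + Real.sqrt 2 * u₃ * q ^ 2))
        (Real.exp u₁ * (p + u₃ * q / Real.sqrt 2)) (Real.exp u₂ * q)
        * Lsolv6 u₁ u₂ u₃ u₄ U₅ U₆ := by
    ext i j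
    fin_cases i <;> fin_cases j <;>
      simp [Lsolv6, frakL, Matrix.mul_apply, Fin.sum_univ_six, Matrix.cons_val_two,
        Matrix.cons_val_three, Matrix.cons_val_four, c5, Matrix.vecHead, Matrix.vecTail,
        Real.exp_add, Real.exp_neg]
    all_goals try field_simp
    all_goals try ring_nf
    all_goals try simp only [h2, h3, h4, h5, h6, h7, h8]
    all_goals try ring_nf
  rw [key, Matrix.mul_assoc,
    Matrix.mul_nonsing_inv _ (by rw [hd]; exact isUnit_one), Matrix.mul_one]
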